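/- arXiv:2405.11184 — 4 statements merged into one kernel-verified Lean document; each statement's English description precedes it below -/
import Mathlib

section
/- Let Q be a finite quiver without cycles, and for each i ≥ 1 let n_Q^i denote the linear subspace of n_Q spanned by the paths of length i. Then [n_Q^i, n_Q^j] = n_Q^{i+j} for all i, j ≥ 1. -/
open scoped Classical

noncomputable section

variable {V E : Type*}

/-- A (positive-length) path in the quiver `(V, E, s, t)`: a nonempty list of arrows
in which consecutive arrows are composable, i.e. `t αᵢ = s αᵢ₊₁`. -/
def IsPath (s t : E → V) (l : List E) : Prop :=
  l ≠ [] ∧ l.Chain' (fun a b => t a = s b)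

/-- The source of a (nonempty) list of arrows, as an `Option`. -/
def src? (s : E → V) (l : List E) : Option V := l.head?.map s

/-- The target of a (nonempty) list of arrows, as an `Option`. -/
def tgt? (t : E → V) (l : List E) : Option V := l.getLast?.map t

/-- The quiver has no cycles: there is no path whose source equals its target. -/
def NoCycles (s t : E → V) : Prop :=
  ∀ l : List E, IsPath s t l → src? s l ≠ tgt? t l

/-- `m` is the maximum of the lengths of paths of the quiver (the length of the quiver). -/
def IsMaxPathLen (s t : E → V) (m : ℕ) : Prop :=
  (∃ l : List E, IsPath s t l ∧ l.length = m) ∧ ∀ l : List E, IsPath s t l → l.length ≤ m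

/-- The set `Path(Q)` of all paths of length `≥ 1`, as a subtype of lists of arrows. -/
abbrev PathQ (s t : E → V) := {l : List E // IsPath s t l}

/-- The underlying vector space of the Lie algebra `n_Q` obtained from the quiver:
the real vector space with basis `Path(Q)`. -/
abbrev nQ (s t : E → V) := PathQ s t →₀ ℝ

/-- The Lie bracket of two basis paths: `[x, y] = xy` if the concatenation `xy` is a path,
`[x, y] = -yx` if the concatenation `yx` is a path, and `[x, y] = 0` otherwise. -/
def braBasis (s t : E → V) (x y : PathQ s t) : nQ s t :=
  if h : IsPath s t (x.val ++ y.val) then Finsupp.single ⟨x.val ++ y.val, h⟩ 1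
  else if h' : IsPath s t (y.val ++ x.val) then -Finsupp.single ⟨y.val ++ x.val, h'⟩ 1
  else 0

/-- The Lie bracket of `n_Q`, extended bilinearly from basis paths. -/
def bra (s t : E → V) (u v : nQ s t) : nQ s t :=
  u.sum fun x cx => v.sum fun y cy => (cx * cy) • braBasis s t x y

/-- The span of all brackets of elements of two subspaces of `n_Q`. -/
def braSpan (s t : E → V) (M N : Submodule ℝ (nQ s t)) : Submodule ℝ (nQ s t) :=
  Submodule.span ℝ {z | ∃ u ∈ M, ∃ v ∈ N, z = bra s t u v}

/-- The subspace `n_Q^i` of `n_Q` spanned by the paths of length `i`. -/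
def lenSubspace (s t : E → V) (i : ℕ) : Submodule ℝ (nQ s t) :=
  Submodule.span ℝ {u | ∃ p : PathQ s t, p.val.length = i ∧ u = Finsupp.single p 1}

/-!
A bracket of two paths of lengths `i` and `j` is `0` or `±` a path of length `i + j`, so by
bilinearity `[n_Q^i, n_Q^j] ⊆ n_Q^{i+j}`. Conversely a path `r` of length `i + j` is the
concatenation of its first `i` and last `j` arrows, and since the concatenation in this order
is a path, their bracket is `r` itself.
-/

section

variable {s t : E → V}

lemma IsPath.take {l : List E} (hl : IsPath s t l) {n : ℕ} (hn : 0 < n) :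
    IsPath s t (l.take n) :=
  ⟨by rw [← List.length_pos_iff, List.length_take]; exact lt_min hn (List.length_pos_iff.2 hl.1),
    hl.2.take n⟩

lemma IsPath.drop {l : List E} (hl : IsPath s t l) {n : ℕ} (hn : n < l.length) :
    IsPath s t (l.drop n) :=
  ⟨by simpa [← List.length_pos_iff] using hn, hl.2.drop n⟩

lemma lenSubspace_eq_supported (i : ℕ) :
    lenSubspace s t i = Finsupp.supported ℝ ℝ {p : PathQ s t | p.val.length = i} := by
  rw [Finsupp.supported_eq_span_single, lenSubspace]
  congr 1
  ext u
  simp [eq_comm]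

lemma bra_single_single (x y : PathQ s t) (c d : ℝ) :
    bra s t (Finsupp.single x c) (Finsupp.single y d) = (c * d) • braBasis s t x y := by
  simp [bra, Finsupp.sum_single_index]

lemma braBasis_of_isPath_append {x y : PathQ s t} (h : IsPath s t (x.val ++ y.val)) :
    braBasis s t x y = Finsupp.single ⟨x.val ++ y.val, h⟩ 1 :=
  dif_pos h

lemma braBasis_mem_lenSubspace {x y : PathQ s t} {i j : ℕ}
    (hx : x.val.length = i) (hy : y.val.length = j) :
    braBasis s t x y ∈ lenSubspace s t (i + j) := by
  rw [lenSubspace_eq_supported]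
  unfold braBasis
  split_ifs
  · exact Finsupp.single_mem_supported ℝ _ (by simp [hx, hy])
  · exact neg_mem (Finsupp.single_mem_supported ℝ _ (by simp [hx, hy, add_comm]))
  · exact zero_mem _

lemma bra_mem_lenSubspace {u v : nQ s t} {i j : ℕ}
    (hu : u ∈ lenSubspace s t i) (hv : v ∈ lenSubspace s t j) :
    bra s t u v ∈ lenSubspace s t (i + j) := by
  rw [lenSubspace_eq_supported, Finsupp.mem_supported] at hu hv
  refine Submodule.finsuppSum_mem _ _ _ _ fun x hx => Submodule.finsuppSum_mem _ _ _ _ fun y hy =>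
    Submodule.smul_mem _ _ (braBasis_mem_lenSubspace (hu (Finsupp.mem_support_iff.2 hx))
      (hv (Finsupp.mem_support_iff.2 hy)))

lemma braSpan_lenSubspace_le (i j : ℕ) :
    braSpan s t (lenSubspace s t i) (lenSubspace s t j) ≤ lenSubspace s t (i + j) := by
  rw [braSpan, Submodule.span_le]
  rintro _ ⟨u, hu, v, hv, rfl⟩
  exact bra_mem_lenSubspace hu hv

lemma single_mem_braSpan {i j : ℕ} (hi : 1 ≤ i) (hj : 1 ≤ j) (r : PathQ s t)
    (hr : r.val.length = i + j) :
    Finsupp.single r 1 ∈ braSpan s t (lenSubspace s t i) (lenSubspace s t j) := by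
  let x : PathQ s t := ⟨r.val.take i, r.2.take hi⟩
  let y : PathQ s t := ⟨r.val.drop i, r.2.drop (by omega)⟩
  have hxy : x.val ++ y.val = r.val := List.take_append_drop i r.val
  have hbra : bra s t (Finsupp.single x 1) (Finsupp.single y 1) = Finsupp.single r 1 := by
    rw [bra_single_single, one_mul, one_smul, braBasis_of_isPath_append (hxy ▸ r.2)]
    exact congrArg (Finsupp.single · 1) (Subtype.ext hxy)
  refine Submodule.subset_span ⟨_, Submodule.subset_span ⟨x, ?_, rfl⟩,
    _, Submodule.subset_span ⟨y, ?_, rfl⟩, hbra.symm⟩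
  · simp [x, hr]
  · simp [y, hr]

end

theorem bracket_of_length_subspaces_general (s t : E → V)
    (i j : ℕ) (hi : 1 ≤ i) (hj : 1 ≤ j) :
    braSpan s t (lenSubspace s t i) (lenSubspace s t j) = lenSubspace s t (i + j) := by
  refine le_antisymm (braSpan_lenSubspace_le i j) ?_
  rw [lenSubspace, Submodule.span_le]
  rintro _ ⟨r, hr, rfl⟩
  exact single_mem_braSpan hi hj r hr

/-- For a finite quiver without cycles,
`[n_Q^i, n_Q^j] = n_Q^(i+j)` for all `i, j ≥ 1`. -/
theorem bracket_of_length_subspaces [Finite V] [Finite E] (s t : E → V)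
    (hQ : NoCycles s t) (i j : ℕ) (hi : 1 ≤ i) (hj : 1 ≤ j) :
    braSpan s t (lenSubspace s t i) (lenSubspace s t j) = lenSubspace s t (i + j) :=
  bracket_of_length_subspaces_general s t i j hi hj

end
end

section
/- Let Q be a finite quiver without cycles of length m (i.e. m is the maximum of the lengths of paths in Q). Then the Lie algebra n_Q obtained by Q is m-step nilpotent: with C⁰n_Q = n_Q and C^k n_Q = [C^{k−1}n_Q, n_Q], one has C^{m−1}n_Q ≠ 0 and C^m n_Q = 0. -/
open scoped Classical

noncomputable section

variable {V E : Type*}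

/-- The descending central series of `n_Q`: `C⁰ n_Q = n_Q`, `Cᵏ n_Q = [Cᵏ⁻¹ n_Q, n_Q]`. -/
def lcs (s t : E → V) : ℕ → Submodule ℝ (nQ s t)
  | 0 => ⊤
  | (k+1) => braSpan s t (lcs s t k) ⊤

/-!
Paths add their lengths under the bracket, so `C^k n_Q` consists of combinations of paths of
length `> k`; conversely a path of length `k + 1` is an iterated bracket of its arrows, so it lies
in `C^k n_Q`. A path of maximal length `m` therefore survives in `C^(m-1) n_Q`, while `C^m n_Q`
would need paths longer than `m`.
-/

section

variable {s t : E → V}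

theorem IsPath.of_append_left {l l' : List E} (h : IsPath s t (l ++ l')) (hl : l ≠ []) :
    IsPath s t l :=
  ⟨hl, h.2.prefix ⟨l', rfl⟩⟩

theorem isPath_singleton (e : E) : IsPath s t [e] :=
  ⟨List.cons_ne_nil e [], List.IsChain.singleton e⟩

end

namespace nQ

variable (s t : E → V)

lemma lcs_succ (k : ℕ) : lcs s t (k + 1) = braSpan s t (lcs s t k) ⊤ := rfl

lemma one_le_length (x : PathQ s t) : 1 ≤ x.val.length :=
  List.length_pos_iff.mpr x.prop.1

def longPaths (n : ℕ) : Submodule ℝ (nQ s t) :=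
  Finsupp.supported ℝ ℝ {p : PathQ s t | n ≤ p.val.length}

lemma longPaths_one : longPaths s t 1 = ⊤ :=
  eq_top_iff.mpr fun u _ => (Finsupp.mem_supported ℝ u).mpr fun p _ => one_le_length s t p

lemma longPaths_eq_bot {m : ℕ} (hmax : ∀ l : List E, IsPath s t l → l.length ≤ m) :
    longPaths s t (m + 1) = ⊥ := by
  have hempty : {p : PathQ s t | m + 1 ≤ p.val.length} = ∅ :=
    Set.eq_empty_of_forall_notMem fun p (hp : m + 1 ≤ p.val.length) =>
      (hmax p.val p.prop).not_gt hp
  rw [longPaths, hempty, Finsupp.supported_empty]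

lemma braBasis_mem_longPaths {a b : ℕ} {x y : PathQ s t} (hx : a ≤ x.val.length)
    (hy : b ≤ y.val.length) : braBasis s t x y ∈ longPaths s t (a + b) := by
  have hlen : a + b ≤ (x.val ++ y.val).length := by rw [List.length_append]; omega
  have hlen' : a + b ≤ (y.val ++ x.val).length := by rw [List.length_append]; omega
  unfold braBasis
  split_ifs
  · exact Finsupp.single_mem_supported ℝ 1 hlen
  · exact Submodule.neg_mem _ (Finsupp.single_mem_supported ℝ 1 hlen')
  · exact Submodule.zero_mem _

lemma bra_mem_longPaths {a b : ℕ} {u v : nQ s t} (hu : u ∈ longPaths s t a)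
    (hv : v ∈ longPaths s t b) : bra s t u v ∈ longPaths s t (a + b) :=
  Submodule.finsuppSum_mem _ _ _ _ fun _ hx => Submodule.finsuppSum_mem _ _ _ _ fun _ hy =>
    Submodule.smul_mem _ _ <| braBasis_mem_longPaths s t (hu (Finsupp.mem_support_iff.mpr hx))
      (hv (Finsupp.mem_support_iff.mpr hy))

lemma lcs_le_longPaths (k : ℕ) : lcs s t k ≤ longPaths s t (k + 1) := by
  induction k with
  | zero => simp [lcs, longPaths_one]
  | succ k ih =>
    rw [lcs_succ, braSpan, Submodule.span_le]
    rintro _ ⟨u, hu, v, -, rfl⟩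
    exact bra_mem_longPaths s t (ih hu) (longPaths_one s t ▸ Submodule.mem_top)

lemma bra_single_single (x y : PathQ s t) :
    bra s t (Finsupp.single x 1) (Finsupp.single y 1) = braBasis s t x y := by
  simp [bra]

lemma braBasis_of_isPath_append {x y : PathQ s t} (h : IsPath s t (x.val ++ y.val)) :
    braBasis s t x y = Finsupp.single ⟨x.val ++ y.val, h⟩ 1 :=
  dif_pos h

lemma single_mem_lcs {k : ℕ} {l : List E} (h : IsPath s t l) (hlen : l.length = k + 1) :
    Finsupp.single (⟨l, h⟩ : PathQ s t) 1 ∈ lcs s t k := by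
  induction k generalizing l with
  | zero => exact Submodule.mem_top
  | succ k ih =>
    obtain ⟨l', e, rfl⟩ : ∃ l' e, l = l' ++ [e] :=
      ⟨l.dropLast, l.getLast h.1, (List.dropLast_append_getLast h.1).symm⟩
    have hlen' : l'.length = k + 1 := by simpa using hlen
    have hl' : IsPath s t l' := h.of_append_left (List.ne_nil_of_length_eq_add_one hlen')
    have hbra : bra s t (Finsupp.single ⟨l', hl'⟩ 1) (Finsupp.single ⟨[e], isPath_singleton e⟩ 1)
        = Finsupp.single ⟨l' ++ [e], h⟩ 1 := by
      rw [bra_single_single, braBasis_of_isPath_append]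
    rw [lcs_succ, ← hbra]
    exact Submodule.subset_span ⟨_, ih hl' hlen', _, Submodule.mem_top, rfl⟩

end nQ

theorem nQ_is_m_step_nilpotent_general (s t : E → V)
    (m : ℕ) (hm : IsMaxPathLen s t m) :
    lcs s t (m - 1) ≠ ⊥ ∧ lcs s t m = ⊥ := by
  obtain ⟨⟨l, hl, hlen⟩, hmax⟩ := hm
  have hm1 : 1 ≤ m := hlen ▸ nQ.one_le_length s t ⟨l, hl⟩
  constructor
  · intro hbot
    have hmem := nQ.single_mem_lcs s t hl (k := m - 1) (by omega)
    rw [hbot, Submodule.mem_bot, Finsupp.single_eq_zero] at hmem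
    exact one_ne_zero hmem
  · exact le_bot_iff.mp (nQ.longPaths_eq_bot s t hmax ▸ nQ.lcs_le_longPaths s t m)

/-- If `Q` is a finite quiver without cycles of length `m`, then `n_Q`
is `m`-step nilpotent: `C^(m-1) n_Q ≠ 0` and `C^m n_Q = 0`. -/
theorem nQ_is_m_step_nilpotent [Finite V] [Finite E] (s t : E → V)
    (hQ : NoCycles s t) (m : ℕ) (hm : IsMaxPathLen s t m) :
    lcs s t (m - 1) ≠ ⊥ ∧ lcs s t m = ⊥ :=
  nQ_is_m_step_nilpotent_general s t m hm

end
end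

section
/- Let Q be a finite quiver without cycles. Then Path(Q) is a nice basis of the Lie algebra n_Q: writing Path(Q) = {x₁,…,x_n} and [x_i,x_j] = Σ_k c_{ij}^k x_k, (1) for any i and j there exists at most one k with c_{ij}^k ≠ 0, and (2) for any i and k there exists at most one j with c_{ij}^k ≠ 0. -/
open scoped Classical

noncomputable section

variable {V E : Type*}

/-! In `[x, y]` at most one of `xy`, `yx` contributes, so the bracket of two basis paths is a
multiple of a single basis path. For (2), the coefficient of `k` in `[x, y]` determines `y` by
cancellation from `k = xy` or `k = yx`; the mixed case `xy₁ = y₂x` is impossible, because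
then `y₂` starts where `x` starts and ends where `x` starts, i.e. `y₂` would be a cycle. -/

variable {s t : E → V}

lemma braBasis_apply_ne_zero {x y k : PathQ s t} (h : braBasis s t x y k ≠ 0) :
    (IsPath s t (x.val ++ y.val) ∧ k.val = x.val ++ y.val) ∨
    (¬ IsPath s t (x.val ++ y.val) ∧ IsPath s t (y.val ++ x.val) ∧
      k.val = y.val ++ x.val) := by
  have val_eq {p : PathQ s t} (hp : Finsupp.single p (1 : ℝ) k ≠ 0) : k.val = p.val :=
    congrArg Subtype.val (Finsupp.single_apply_ne_zero.mp hp).1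
  unfold braBasis at h
  split_ifs at h with hxy hyx
  · exact .inl ⟨hxy, val_eq h⟩
  · exact .inr ⟨hxy, hyx, val_eq (by simpa using h)⟩
  · exact absurd rfl h

lemma NoCycles.head?_ne_of_isPath_append (hQ : NoCycles s t) {y x : List E} (hy : y ≠ [])
    (hp : IsPath s t (y ++ x)) : y.head? ≠ x.head? := by
  intro hhead
  obtain ⟨hy_chain, -, hjoin⟩ := List.isChain_append.mp hp.2
  obtain ⟨a, hx⟩ : ∃ a, x.head? = some a := by
    rw [List.head?_eq_some_head hy] at hhead
    exact ⟨_, hhead.symm⟩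
  have hlast : t (y.getLast hy) = s a :=
    hjoin _ (List.getLast?_eq_some_getLast hy) _ hx
  apply hQ y ⟨hy, hy_chain⟩
  simp only [src?, tgt?, hhead, hx, List.getLast?_eq_some_getLast hy, Option.map_some, hlast]

lemma NoCycles.append_ne_append_of_isPath (hQ : NoCycles s t) {x y z : List E}
    (hx : x ≠ []) (hy : y ≠ []) (hp : IsPath s t (y ++ x)) : x ++ z ≠ y ++ x := by
  intro heq
  apply hQ.head?_ne_of_isPath_append hy hp
  rw [← List.head?_append_of_ne_nil y hy, ← heq, List.head?_append_of_ne_nil x hx]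

theorem pathQ_is_nice_basis_general (s t : E → V)
    (hQ : NoCycles s t) :
    (∀ x y k₁ k₂ : PathQ s t,
      braBasis s t x y k₁ ≠ 0 → braBasis s t x y k₂ ≠ 0 → k₁ = k₂) ∧
    (∀ x k y₁ y₂ : PathQ s t,
      braBasis s t x y₁ k ≠ 0 → braBasis s t x y₂ k ≠ 0 → y₁ = y₂) := by
  constructor
  · intro x y k₁ k₂ h₁ h₂
    apply Subtype.ext
    rcases braBasis_apply_ne_zero h₁ with ⟨hxy, hk₁⟩ | ⟨hxy, -, hk₁⟩ <;>
      rcases braBasis_apply_ne_zero h₂ with ⟨hxy', hk₂⟩ | ⟨hxy', -, hk₂⟩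
    all_goals first | exact hk₁.trans hk₂.symm | contradiction
  · intro x k y₁ y₂ h₁ h₂
    apply Subtype.ext
    rcases braBasis_apply_ne_zero h₁ with ⟨-, hk₁⟩ | ⟨-, hyx₁, hk₁⟩ <;>
      rcases braBasis_apply_ne_zero h₂ with ⟨-, hk₂⟩ | ⟨-, hyx₂, hk₂⟩
    · exact List.append_cancel_left (hk₁.symm.trans hk₂)
    · exact absurd (hk₁.symm.trans hk₂) (hQ.append_ne_append_of_isPath x.2.1 y₂.2.1 hyx₂)
    · exact absurd (hk₂.symm.trans hk₁) (hQ.append_ne_append_of_isPath x.2.1 y₁.2.1 hyx₁)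
    · exact List.append_cancel_right (hk₁.symm.trans hk₂)

/-- For a finite quiver without cycles, `Path(Q)` is a nice basis of
`n_Q`: (1) for any basis paths `x, y` there is at most one basis path with nonzero
coefficient in `[x, y]`, and (2) for any basis paths `x, k` there is at most one basis
path `y` such that the coefficient of `k` in `[x, y]` is nonzero. -/
theorem pathQ_is_nice_basis [Finite V] [Finite E] (s t : E → V)
    (hQ : NoCycles s t) :
    (∀ x y k₁ k₂ : PathQ s t,
      braBasis s t x y k₁ ≠ 0 → braBasis s t x y k₂ ≠ 0 → k₁ = k₂) ∧
    (∀ x k y₁ y₂ : PathQ s t,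
      braBasis s t x y₁ k ≠ 0 → braBasis s t x y₂ k ≠ 0 → y₁ = y₂) :=
  pathQ_is_nice_basis_general s t hQ

end
end

section
/- Let (n,⟨,⟩) be a finite-dimensional metric nilpotent Lie algebra over ℝ and let {X₁,…,X_n} be an orthonormal nice basis of (n,⟨,⟩). Then the Ricci operator is diagonal with respect to this basis: Ric(X_k) = r_k X_k for each k, where r_k = −(1/2) Σ_{i,j} ⟨[X_k,X_i],X_j⟩² + (1/2) Σ_{i<j} ⟨[X_i,X_j],X_k⟩². -/
/-!
In an orthonormal basis the inner product reads off coordinates, so `⟨Ric X_k, X_l⟩` is a sum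
of products of structure constants. For `k ≠ l` every product vanishes: a nonzero
`⟨[X_k, X_i], X_j⟩ ⟨[X_l, X_i], X_j⟩` would give two brackets with `X_i` having the same
nonzero `X_j`-coordinate, and `⟨[X_i, X_j], X_k⟩ ⟨[X_i, X_j], X_l⟩` two nonzero coordinates of
one bracket, both excluded for a nice basis. For `k = l` the antisymmetry of the bracket turns
the sum over all pairs `(i, j)` into twice the sum over `i < j`.
-/

open Module

theorem Finset.sum_sum_eq_two_nsmul_sum_sum_lt {ι M : Type*} [Fintype ι] [LinearOrder ι]
    [AddCommMonoid M] (f : ι → ι → M) (hdiag : ∀ i, f i i = 0) (hsymm : ∀ i j, f i j = f j i) :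
    ∑ i, ∑ j, f i j = 2 • ∑ i, ∑ j, if i < j then f i j else 0 := by
  have hsplit : ∀ i j, f i j = (if i < j then f i j else 0) + if j < i then f j i else 0 := by
    intro i j
    rcases lt_trichotomy i j with h | rfl | h
    · simp [h, h.not_gt]
    · simp [hdiag]
    · simp [h, h.not_gt, hsymm i j]
  calc ∑ i, ∑ j, f i j
      = ∑ i, ∑ j, ((if i < j then f i j else 0) + if j < i then f j i else 0) :=
        Finset.sum_congr rfl fun i _ => Finset.sum_congr rfl fun j _ => hsplit i j
    _ = 2 • ∑ i, ∑ j, if i < j then f i j else 0 := by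
        simp only [Finset.sum_add_distrib]
        rw [Finset.sum_comm (f := fun i j => if j < i then f j i else 0), two_nsmul]

theorem Module.Basis.eq_repr_smul_of_repr_eq_zero {R M ι : Type*} [Semiring R]
    [AddCommMonoid M] [Module R M] (b : Basis ι R M) {v : M} {k : ι}
    (h : ∀ l, l ≠ k → b.repr v l = 0) : v = b.repr v k • b k := by
  refine b.ext_elem fun l => ?_
  rcases eq_or_ne l k with rfl | hl
  · simp
  · simp [h l hl, hl.symm]

theorem Module.Basis.apply_eq_repr_of_orthonormal {R M ι : Type*} [CommSemiring R]
    [AddCommMonoid M] [Module R M] [DecidableEq ι] (b : Basis ι R M) (ip : M →ₗ[R] M →ₗ[R] R)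
    (horth : ∀ i j, ip (b i) (b j) = if i = j then 1 else 0) (v : M) (j : ι) :
    ip v (b j) = b.repr v j :=
  LinearMap.congr_fun (b.ext (f₁ := ip.flip (b j)) (f₂ := b.coord j) fun i => by
    simp [horth, Finsupp.single_apply]) v

section StructureConstants

variable {R L ι : Type*} [CommRing R] [LieRing L] [LieAlgebra R L] (b : Basis ι R L)

theorem repr_lie_mul_repr_lie_eq_zero_of_ne
    (hnice : ∀ i j k l, b.repr ⁅b i, b j⁆ k ≠ 0 → b.repr ⁅b i, b j⁆ l ≠ 0 → k = l)
    (i j : ι) {k l : ι} (hkl : k ≠ l) : b.repr ⁅b i, b j⁆ k * b.repr ⁅b i, b j⁆ l = 0 :=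
  mul_eq_zero_of_ne_zero_imp_eq_zero fun hk => of_not_not fun hl => hkl (hnice i j k l hk hl)

theorem repr_lie_mul_repr_lie_eq_zero_of_ne_left
    (hnice : ∀ i k j₁ j₂, b.repr ⁅b i, b j₁⁆ k ≠ 0 → b.repr ⁅b i, b j₂⁆ k ≠ 0 → j₁ = j₂)
    (i j : ι) {k l : ι} (hkl : k ≠ l) : b.repr ⁅b k, b i⁆ j * b.repr ⁅b l, b i⁆ j = 0 := by
  rw [← lie_skew (b k) (b i), ← lie_skew (b l) (b i), map_neg, map_neg, Finsupp.neg_apply,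
    Finsupp.neg_apply, neg_mul_neg]
  exact mul_eq_zero_of_ne_zero_imp_eq_zero fun hk =>
    of_not_not fun hl => hkl (hnice i j k l hk hl)

theorem sum_sum_sq_repr_lie_eq_two_mul_sum_sum_lt [Fintype ι] [LinearOrder ι] (k : ι) :
    ∑ i, ∑ j, b.repr ⁅b i, b j⁆ k ^ 2
      = 2 * ∑ i, ∑ j, if i < j then b.repr ⁅b i, b j⁆ k ^ 2 else 0 := by
  rw [Finset.sum_sum_eq_two_nsmul_sum_sum_lt _ (fun i => by simp) fun i j => ?_, two_nsmul,
    two_mul]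
  rw [← lie_skew (b j) (b i), map_neg, Finsupp.neg_apply, neg_sq]

end StructureConstants

theorem ricci_diagonal_wrt_orthonormal_nice_basis_general
    {n : Type*} [LieRing n] [LieAlgebra ℝ n]
    {N : ℕ} (b : Module.Basis (Fin N) ℝ n)
    (ip : n →ₗ[ℝ] n →ₗ[ℝ] ℝ)
    (horth : ∀ i j : Fin N, ip (b i) (b j) = if i = j then 1 else 0)
    (hnice1 : ∀ i j k l : Fin N,
      b.repr ⁅b i, b j⁆ k ≠ 0 → b.repr ⁅b i, b j⁆ l ≠ 0 → k = l)
    (hnice2 : ∀ i k j₁ j₂ : Fin N,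
      b.repr ⁅b i, b j₁⁆ k ≠ 0 → b.repr ⁅b i, b j₂⁆ k ≠ 0 → j₁ = j₂)
    (Ric : n →ₗ[ℝ] n)
    (hRic : ∀ X Y : n, ip (Ric X) Y =
      -(1/2) * ∑ i, ∑ j, ip ⁅X, b i⁆ (b j) * ip ⁅Y, b i⁆ (b j)
      + (1/4) * ∑ i, ∑ j, ip ⁅b i, b j⁆ X * ip ⁅b i, b j⁆ Y) :
    ∀ k : Fin N, Ric (b k) =
      (-(1/2) * ∑ i, ∑ j, (ip ⁅b k, b i⁆ (b j))^2
        + (1/2) * ∑ i, ∑ j, (if i < j then (ip ⁅b i, b j⁆ (b k))^2 else 0)) • b k := by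
  intro k
  have hcoord := b.apply_eq_repr_of_orthonormal ip horth
  have hoff : ∀ l, l ≠ k → b.repr (Ric (b k)) l = 0 := by
    intro l hlk
    rw [← hcoord, hRic]
    simp only [hcoord, repr_lie_mul_repr_lie_eq_zero_of_ne_left b hnice2 _ _ hlk.symm,
      repr_lie_mul_repr_lie_eq_zero_of_ne b hnice1 _ _ hlk.symm, Finset.sum_const_zero]
    ring
  rw [b.eq_repr_smul_of_repr_eq_zero hoff, ← hcoord, hRic]
  simp only [hcoord, ← sq]
  rw [sum_sum_sq_repr_lie_eq_two_mul_sum_sum_lt]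
  congr 1
  ring

/-- Let `(n, ⟨,⟩)` be a finite-dimensional metric nilpotent Lie algebra
over `ℝ` and let `{X₁, …, X_N}` be an orthonormal nice basis. Then the Ricci operator
(the operator determined by the standard formula with respect to an orthonormal basis)
is diagonal with respect to this basis:
`Ric (X k) = r k • X k` with
`r k = -(1/2) Σᵢⱼ ⟨[X k, X i], X j⟩² + (1/2) Σ_{i<j} ⟨[X i, X j], X k⟩²`. -/
theorem ricci_diagonal_wrt_orthonormal_nice_basis
    {n : Type*} [LieRing n] [LieAlgebra ℝ n]
    (hnil : LieRing.IsNilpotent n)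
    {N : ℕ} (b : Module.Basis (Fin N) ℝ n)
    (ip : n →ₗ[ℝ] n →ₗ[ℝ] ℝ)
    (hsym : ∀ X Y : n, ip X Y = ip Y X)
    (hpos : ∀ X : n, X ≠ 0 → 0 < ip X X)
    (horth : ∀ i j : Fin N, ip (b i) (b j) = if i = j then 1 else 0)
    (hnice1 : ∀ i j k l : Fin N,
      b.repr ⁅b i, b j⁆ k ≠ 0 → b.repr ⁅b i, b j⁆ l ≠ 0 → k = l)
    (hnice2 : ∀ i k j₁ j₂ : Fin N,
      b.repr ⁅b i, b j₁⁆ k ≠ 0 → b.repr ⁅b i, b j₂⁆ k ≠ 0 → j₁ = j₂)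
    (Ric : n →ₗ[ℝ] n)
    (hRic : ∀ X Y : n, ip (Ric X) Y =
      -(1/2) * ∑ i, ∑ j, ip ⁅X, b i⁆ (b j) * ip ⁅Y, b i⁆ (b j)
      + (1/4) * ∑ i, ∑ j, ip ⁅b i, b j⁆ X * ip ⁅b i, b j⁆ Y) :
    ∀ k : Fin N, Ric (b k) =
      (-(1/2) * ∑ i, ∑ j, (ip ⁅b k, b i⁆ (b j))^2
        + (1/2) * ∑ i, ∑ j, (if i < j then (ip ⁅b i, b j⁆ (b k))^2 else 0)) • b k :=
  ricci_diagonal_wrt_orthonormal_nice_basis_general b ip horth hnice1 hnice2 Ric hRic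
end
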